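/- arXiv:1506.06378 — 4 statements merged into one kernel-verified Lean document; each statement's English description precedes it below -/
import Mathlib

section
/- Lemma (Characterization of E and D, part a): for every labeled NetKAT program p, p ≡ E⟦p⟧ + Σ D⟦p⟧, i.e., for every history h, ⟦p⟧ h = ⟦E⟦p⟧ + Σ D⟦p⟧⟧ h. -/
namespace NetKAT

/-- Packets: assignments of (natural-number) values to fields. -/
abbrev Packet (F : Type) := F → ℕ

/-- Histories: a nonempty list of packets, represented as (head packet, tail). -/
abbrev Hist (F : Type) := Packet F × List (Packet F)

/-- NetKAT predicates. -/
inductive Pred (F : Type) where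
  | id : Pred F
  | drop : Pred F
  | test : F → ℕ → Pred F
  | or : Pred F → Pred F → Pred F
  | and : Pred F → Pred F → Pred F
  | not : Pred F → Pred F
  deriving DecidableEq

/-- Labeled NetKAT programs: every occurrence of `dup` carries a label from `L`. -/
inductive LPol (F L : Type) where
  | filter : Pred F → LPol F L
  | mod : F → ℕ → LPol F L
  | union : LPol F L → LPol F L → LPol F L
  | seq : LPol F L → LPol F L → LPol F L
  | star : LPol F L → LPol F L
  | dup : L → LPol F L
  deriving DecidableEq

/-- Iterates of a packet-processing function. -/
def iterRel {F : Type} (f : Hist F → Set (Hist F)) : ℕ → Hist F → Set (Hist F)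
  | 0, h => {h}
  | i+1, h => ⋃ h' ∈ f h, iterRel f i h'

/-- Semantics of predicates (as filters on histories). -/
def predSem {F : Type} : Pred F → Hist F → Set (Hist F)
  | .id, h => {h}
  | .drop, _ => ∅
  | .test f n, h => if h.1 f = n then {h} else ∅
  | .or a b, h => predSem a h ∪ predSem b h
  | .and a b, h => ⋃ h' ∈ predSem a h, predSem b h'
  | .not a, h => {h} \ predSem a h

/-- Semantics of labeled NetKAT programs (labels do not affect the semantics). -/
def polSem {F L : Type} [DecidableEq F] : LPol F L → Hist F → Set (Hist F)
  | .filter a, h => predSem a h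
  | .mod f n, h => {(Function.update h.1 f n, h.2)}
  | .union p q, h => polSem p h ∪ polSem q h
  | .seq p q, h => ⋃ h' ∈ polSem p h, polSem q h'
  | .star p, h => ⋃ i : ℕ, iterRel (fun h' => polSem p h') i h
  | .dup _, h => {(h.1, h.1 :: h.2)}

/-- A program is dup-free if it contains no occurrence of `dup`. -/
def LPol.dupFree {F L : Type} : LPol F L → Prop
  | .filter _ => True
  | .mod _ _ => True
  | .union p q => p.dupFree ∧ q.dupFree
  | .seq p q => p.dupFree ∧ q.dupFree
  | .star p => p.dupFree
  | .dup _ => False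

/-- The list of dup labels occurring in a program. -/
def labelList {F L : Type} : LPol F L → List L
  | .filter _ => []
  | .mod _ _ => []
  | .union p q => labelList p ++ labelList q
  | .seq p q => labelList p ++ labelList q
  | .star p => labelList p
  | .dup l => [l]

variable {F L : Type} [DecidableEq F] [DecidableEq L]

/-- The local component `E⟦p⟧` of a program. -/
def EE : LPol F L → LPol F L
  | .filter a => .filter a
  | .mod f n => .mod f n
  | .union q r => .union (EE q) (EE r)
  | .seq q r => .seq (EE q) (EE r)
  | .star q => .star (EE q)
  | .dup _ => .filter .drop

/-- The global components `D⟦p⟧` of a program: a finite set of triples `(d, ℓ, k)`. -/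
def DD : LPol F L → Finset (LPol F L × L × LPol F L)
  | .filter _ => ∅
  | .mod _ _ => ∅
  | .union q r => DD q ∪ DD r
  | .seq q r =>
      (DD q).image (fun t => (t.1, t.2.1, LPol.seq t.2.2 r)) ∪
      (DD r).image (fun t => (LPol.seq (EE q) t.1, t.2.1, t.2.2))
  | .star q =>
      (DD q).image (fun t => (LPol.seq (EE (.star q)) t.1, t.2.1, LPol.seq t.2.2 (.star q)))
  | .dup l => {(.filter .id, l, .filter .id)}

/-- Observation function of the automaton `A(p)`, given the continuation map `κ`
(state `none` is the initial state `0`, state `some ℓ` is the label `ℓ`):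
`ε s pk = {pk' | [pk'] ∈ ⟦E⟦k_s⟧⟧ [pk]}`. -/
def obs (κ : Option L → LPol F L) (s : Option L) (pk : Packet F) : Set (Packet F) :=
  {pk' | ((pk', ([] : List (Packet F))) : Hist F) ∈
            polSem (EE (κ s)) ((pk, ([] : List (Packet F))) : Hist F)}

/-- Continuation function of the automaton `A(p)`, given the continuation map `κ`:
`δ s pk = {(pk', ℓ') | ∃ (d, ℓ', k) ∈ D⟦k_s⟧, [pk'] ∈ ⟦d⟧ [pk]}`. -/
def trans (κ : Option L → LPol F L) (s : Option L) (pk : Packet F) :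
    Set (Packet F × Option L) :=
  {q | ∃ l' d k, q.2 = some l' ∧ (d, l', k) ∈ DD (κ s) ∧
        ((q.1, ([] : List (Packet F))) : Hist F) ∈
          polSem d ((pk, ([] : List (Packet F))) : Hist F)}

/-- Acceptance of a guarded string `(pk_in, [pk₁, …, pk_n], pk_out)` from state `s`. -/
def accept (κ : Option L → LPol F L) :
    Option L → Packet F → List (Packet F) → Packet F → Prop
  | s, pkin, [], pkout => pkout ∈ obs κ s pkin
  | s, pkin, pk1 :: w, pkout =>
      ∃ s', (pk1, s') ∈ trans κ s pkin ∧ accept κ s' pk1 w pkout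

set_option linter.unusedSectionVars false

lemma mem_seq_iff (p q : LPol F L) (h x : Hist F) :
    x ∈ polSem (LPol.seq p q) h ↔ ∃ h', h' ∈ polSem p h ∧ x ∈ polSem q h' := by
  simp [polSem]

lemma mem_star_iff (q : LPol F L) (h x : Hist F) :
    x ∈ polSem (LPol.star q) h ↔ ∃ i, x ∈ iterRel (fun h' => polSem q h') i h := by
  simp [polSem]

lemma mem_star_self (q : LPol F L) (h : Hist F) : h ∈ polSem (LPol.star q) h := by
  rw [mem_star_iff]; exact ⟨0, rfl⟩

lemma star_step {q : LPol F L} {h h' : Hist F} (hh : h' ∈ polSem q h) :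
    h' ∈ polSem (LPol.star q) h := by
  rw [mem_star_iff]
  refine ⟨1, ?_⟩
  simp only [iterRel, Set.mem_iUnion]
  exact ⟨h', hh, rfl⟩

lemma iterRel_trans {f : Hist F → Set (Hist F)} :
    ∀ {i j : ℕ} {h h' x : Hist F}, h' ∈ iterRel f i h → x ∈ iterRel f j h' →
      x ∈ iterRel f (i + j) h := by
  intro i
  induction i with
  | zero => intro j h h' x h1 h2; simp only [iterRel, Set.mem_singleton_iff] at h1; subst h1; simpa using h2
  | succ n ih =>
    intro j h h' x h1 h2
    simp only [iterRel, Set.mem_iUnion] at h1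
    obtain ⟨hm, hhm, h1'⟩ := h1
    have hx : x ∈ iterRel f (n + j) hm := ih h1' h2
    have heq : n + 1 + j = (n + j) + 1 := by omega
    rw [heq]
    simp only [iterRel, Set.mem_iUnion]
    exact ⟨hm, hhm, hx⟩

lemma star_trans {q : LPol F L} {h h' x : Hist F} (h1 : h' ∈ polSem (LPol.star q) h)
    (h2 : x ∈ polSem (LPol.star q) h') : x ∈ polSem (LPol.star q) h := by
  rw [mem_star_iff] at h1 h2 ⊢
  obtain ⟨i, hi⟩ := h1
  obtain ⟨j, hj⟩ := h2
  exact ⟨i + j, iterRel_trans hi hj⟩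

lemma iterRel_mono {f g : Hist F → Set (Hist F)} (hfg : ∀ h, f h ⊆ g h) :
    ∀ (i : ℕ) (h : Hist F), iterRel f i h ⊆ iterRel g i h := by
  intro i
  induction i with
  | zero => intro h; exact le_refl _
  | succ n ih =>
    intro h x hx
    simp only [iterRel, Set.mem_iUnion] at hx ⊢
    obtain ⟨hm, hhm, hx'⟩ := hx
    exact ⟨hm, hfg h hhm, ih hm hx'⟩

lemma star_mono {q r : LPol F L} (hqr : ∀ h, polSem q h ⊆ polSem r h) (h : Hist F) :
    polSem (LPol.star q) h ⊆ polSem (LPol.star r) h := by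
  intro x hx
  rw [mem_star_iff] at hx ⊢
  obtain ⟨i, hi⟩ := hx
  exact ⟨i, iterRel_mono hqr i h hi⟩

/-- **Characterization of E and D, part (a).** For every labeled program `p`,
`p ≡ E⟦p⟧ + Σ D⟦p⟧`: for every history `h`,
`⟦p⟧ h = ⟦E⟦p⟧⟧ h ∪ ⋃_{(d,ℓ,k) ∈ D⟦p⟧} ⟦d · dup^ℓ · k⟧ h`. -/
theorem e_d_characterization_a [Fintype F] (p : LPol F L) (h : Hist F) :
    polSem p h =
      polSem (EE p) h ∪
        ⋃ t ∈ DD p, polSem (LPol.seq t.1 (LPol.seq (.dup t.2.1) t.2.2)) h := by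
  induction p generalizing h with
  | filter a => simp [EE, DD]
  | mod f n => simp [EE, DD]
  | dup l =>
    ext x
    simp [EE, DD, polSem, predSem]
  | union q r ihq ihr =>
    have e1 : polSem (LPol.union q r) h = polSem q h ∪ polSem r h := rfl
    have e2 : polSem (EE (LPol.union q r)) h = polSem (EE q) h ∪ polSem (EE r) h := rfl
    have e3 : DD (LPol.union q r) = DD q ∪ DD r := rfl
    rw [e1, e2, e3, Finset.set_biUnion_union, ihq, ihr]
    ext x
    simp only [Set.mem_union]
    tauto
  | seq q r ihq ihr =>
    ext x
    constructor
    · intro hx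
      rw [mem_seq_iff] at hx
      obtain ⟨h', hh', hx⟩ := hx
      rw [ihq h] at hh'
      rcases hh' with hh' | hh'
      · rw [ihr h'] at hx
        rcases hx with hx | hx
        · refine Or.inl ?_
          simp only [EE, mem_seq_iff]
          exact ⟨h', hh', hx⟩
        · simp only [Set.mem_iUnion] at hx
          obtain ⟨t, ht, hx⟩ := hx
          refine Or.inr ?_
          simp only [Set.mem_iUnion]
          refine ⟨(LPol.seq (EE q) t.1, t.2.1, t.2.2), ?_, ?_⟩
          · simp only [DD, Finset.mem_union, Finset.mem_image]
            exact Or.inr ⟨t, ht, rfl⟩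
          · simp only [mem_seq_iff] at hx ⊢
            obtain ⟨hm, hmd, hx⟩ := hx
            exact ⟨hm, ⟨h', hh', hmd⟩, hx⟩
      · simp only [Set.mem_iUnion] at hh'
        obtain ⟨t, ht, hh'⟩ := hh'
        refine Or.inr ?_
        simp only [Set.mem_iUnion]
        refine ⟨(t.1, t.2.1, LPol.seq t.2.2 r), ?_, ?_⟩
        · simp only [DD, Finset.mem_union, Finset.mem_image]
          exact Or.inl ⟨t, ht, rfl⟩
        · simp only [mem_seq_iff] at hh' ⊢
          obtain ⟨hm, hmd, hd, hdd, hh'⟩ := hh'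
          exact ⟨hm, hmd, hd, hdd, h', hh', hx⟩
    · intro hx
      rcases hx with hx | hx
      · simp only [EE, mem_seq_iff] at hx
        obtain ⟨h', hh', hx⟩ := hx
        rw [mem_seq_iff]
        refine ⟨h', ?_, ?_⟩
        · rw [ihq h]; exact Or.inl hh'
        · rw [ihr h']; exact Or.inl hx
      · simp only [Set.mem_iUnion] at hx
        obtain ⟨t, ht, hx⟩ := hx
        simp only [DD, Finset.mem_union, Finset.mem_image] at ht
        rcases ht with ⟨s, hs, hst⟩ | ⟨s, hs, hst⟩
        · subst hst
          simp only [mem_seq_iff] at hx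
          obtain ⟨hm, hmd, hd, hdd, h', hh', hx⟩ := hx
          rw [mem_seq_iff]
          refine ⟨h', ?_, hx⟩
          rw [ihq h]
          refine Or.inr ?_
          simp only [Set.mem_iUnion]
          refine ⟨s, hs, ?_⟩
          simp only [mem_seq_iff]
          exact ⟨hm, hmd, hd, hdd, hh'⟩
        · subst hst
          simp only [mem_seq_iff] at hx
          obtain ⟨hm, ⟨h', hh', hmd⟩, hx⟩ := hx
          rw [mem_seq_iff]
          refine ⟨h', ?_, ?_⟩
          · rw [ihq h]; exact Or.inl hh'
          · rw [ihr h']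
            refine Or.inr ?_
            simp only [Set.mem_iUnion]
            refine ⟨s, hs, ?_⟩
            simp only [mem_seq_iff]
            exact ⟨hm, hmd, hx⟩
  | star q ihq =>
    have hEsub : ∀ h' : Hist F, polSem (EE q) h' ⊆ polSem q h' := by
      intro h' x hx
      rw [ihq h']; exact Or.inl hx
    have hDsub : ∀ (t : LPol F L × L × LPol F L), t ∈ DD q → ∀ h' : Hist F,
        polSem (LPol.seq t.1 (LPol.seq (.dup t.2.1) t.2.2)) h' ⊆ polSem q h' := by
      intro t ht h' x hx
      rw [ihq h']
      refine Or.inr ?_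
      simp only [Set.mem_iUnion]
      exact ⟨t, ht, hx⟩
    ext x
    constructor
    · intro hx
      rw [mem_star_iff] at hx
      obtain ⟨i, hi⟩ := hx
      induction i generalizing h with
      | zero =>
        simp only [iterRel, Set.mem_singleton_iff] at hi
        subst hi
        refine Or.inl ?_
        simp only [EE]
        exact mem_star_self _ _
      | succ n ih =>
        simp only [iterRel, Set.mem_iUnion] at hi
        obtain ⟨h', hh', hi⟩ := hi
        have hx' := ih h' hi
        rw [ihq h] at hh'
        rcases hh' with hh' | hh'
        · have hstep : h' ∈ polSem (LPol.star (EE q)) h := star_step hh'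
          rcases hx' with hx' | hx'
          · refine Or.inl ?_
            simp only [EE] at hx' ⊢
            exact star_trans hstep hx'
          · simp only [Set.mem_iUnion] at hx'
            obtain ⟨t, ht, hx'⟩ := hx'
            refine Or.inr ?_
            simp only [Set.mem_iUnion]
            refine ⟨t, ht, ?_⟩
            simp only [DD, EE, Finset.mem_image] at ht
            obtain ⟨s, hs, hst⟩ := ht
            subst hst
            simp only [EE, mem_seq_iff] at hx' ⊢
            obtain ⟨hm, ⟨he, hhe, hmd⟩, hx'⟩ := hx'
            exact ⟨hm, ⟨he, star_trans hstep hhe, hmd⟩, hx'⟩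
        · simp only [Set.mem_iUnion] at hh'
          obtain ⟨t, ht, hh'⟩ := hh'
          refine Or.inr ?_
          simp only [Set.mem_iUnion]
          refine ⟨(LPol.seq (LPol.star (EE q)) t.1, t.2.1, LPol.seq t.2.2 (LPol.star q)),
            ?_, ?_⟩
          · simp only [DD, EE, Finset.mem_image]
            exact ⟨t, ht, rfl⟩
          · simp only [mem_seq_iff] at hh' ⊢
            obtain ⟨hm, hmd, hd, hdd, hh'⟩ := hh'
            refine ⟨hm, ⟨h, mem_star_self _ _, hmd⟩, hd, hdd, h', hh', ?_⟩
            rw [mem_star_iff]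
            exact ⟨n, hi⟩
    · intro hx
      rcases hx with hx | hx
      · simp only [EE] at hx
        exact star_mono hEsub h hx
      · simp only [Set.mem_iUnion, DD, EE, Finset.mem_image] at hx
        obtain ⟨t, ⟨s, hs, hst⟩, hx⟩ := hx
        subst hst
        simp only [mem_seq_iff] at hx
        obtain ⟨hm, ⟨h1, hh1, hmd⟩, hd, hdd, h2, hh2, hx⟩ := hx
        have hh1' : h1 ∈ polSem (LPol.star q) h := star_mono hEsub h hh1
        have hstepq : h2 ∈ polSem q h1 := by
          apply hDsub s hs h1
          simp only [mem_seq_iff]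
          exact ⟨hm, hmd, hd, hdd, hh2⟩
        exact star_trans hh1' (star_trans (star_step hstepq) hx)

end NetKAT
end

section
/- Lemma (Characterization of E and D, part c): for every labeled NetKAT program p and every triple (d, ℓ, k) ∈ D⟦p⟧, the program d is dup-free. -/
namespace NetKAT

variable {F L : Type} [DecidableEq F] [DecidableEq L]

theorem EE_dupFree : ∀ p : LPol F L, (EE p).dupFree
  | .filter _ => trivial
  | .mod _ _ => trivial
  | .union q r => ⟨EE_dupFree q, EE_dupFree r⟩
  | .seq q r => ⟨EE_dupFree q, EE_dupFree r⟩
  | .star q => EE_dupFree q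
  | .dup _ => trivial

/-- **Characterization of E and D, part (c).** For every labeled program `p` and every
triple `(d, ℓ, k) ∈ D⟦p⟧`, the program `d` is dup-free. -/
theorem e_d_characterization_c [Fintype F] (p : LPol F L)
    (d : LPol F L) (l : L) (k : LPol F L) (hmem : (d, l, k) ∈ DD p) :
    d.dupFree := by
  induction p generalizing d l k with
  | filter a => simp [DD] at hmem
  | mod f n => simp [DD] at hmem
  | union q r ihq ihr =>
    simp only [DD, Finset.mem_union] at hmem
    rcases hmem with h | h
    · exact ihq _ _ _ h
    · exact ihr _ _ _ h
  | seq q r ihq ihr =>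
    simp only [DD, Finset.mem_union, Finset.mem_image] at hmem
    rcases hmem with ⟨⟨d',l',k'⟩, h, heq⟩ | ⟨⟨d',l',k'⟩, h, heq⟩
    · obtain ⟨h1, h2, h3⟩ := Prod.mk.injEq .. ▸ heq
      subst h1; exact ihq _ _ _ h
    · injection heq with h1 h2
      subst h1
      exact ⟨EE_dupFree q, ihr _ _ _ h⟩
  | star q ihq =>
    simp only [DD, Finset.mem_image] at hmem
    obtain ⟨⟨d',l',k'⟩, h, heq⟩ := hmem
    injection heq with h1 h2
    subst h1
    exact ⟨EE_dupFree _, ihq _ _ _ h⟩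
  | dup lab =>
    simp only [DD, Finset.mem_singleton] at hmem
    injection hmem with h1 h2
    subst h1; trivial

end NetKAT
end

section
/- Lemma (Characterization of E and D, part d): if the dup labels occurring in a NetKAT program p are pairwise distinct, then for every label ℓ occurring in p there exist unique programs d and k such that (d, ℓ, k) ∈ D⟦p⟧ (i.e., exactly one triple in D⟦p⟧ carries the label ℓ). -/
/-!
Each clause of `D⟦p⟧` keeps the label of a triple of a subprogram and only wraps its
`d` and `k`, so by induction on `p` every label occurring in `p` is carried by some
triple, and every triple's label occurs in `p`. The latter makes the triples of the two
halves of `q + r` or `q · r` carry disjoint labels when the labels of `p` are distinct,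
so triples with the same label come from the same subprogram and, inductively, agree.
-/

namespace NetKAT

variable {F L : Type} [DecidableEq F] [DecidableEq L]

lemma mem_DD_seq {q r d k : LPol F L} {l : L} :
    (d, l, k) ∈ DD (.seq q r) ↔
      (∃ k₀, (d, l, k₀) ∈ DD q ∧ k = .seq k₀ r) ∨
      (∃ d₀, (d₀, l, k) ∈ DD r ∧ d = .seq (EE q) d₀) := by
  simp only [DD, Finset.mem_union, Finset.mem_image, Prod.exists, Prod.mk.injEq]
  grind

lemma mem_DD_star {q d k : LPol F L} {l : L} :
    (d, l, k) ∈ DD (.star q) ↔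
      ∃ d₀ k₀, (d₀, l, k₀) ∈ DD q ∧ d = .seq (EE (.star q)) d₀ ∧ k = .seq k₀ (.star q) := by
  simp only [DD, Finset.mem_image, Prod.exists, Prod.mk.injEq]
  grind

lemma mem_labelList_of_mem_DD {p d k : LPol F L} {l : L} (h : (d, l, k) ∈ DD p) :
    l ∈ labelList p := by
  induction p generalizing d k with
  | filter | mod => simp [DD] at h
  | union q r ihq ihr =>
    simp only [DD, Finset.mem_union] at h
    simp only [labelList, List.mem_append]
    exact h.imp ihq ihr
  | seq q r ihq ihr =>
    simp only [labelList, List.mem_append]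
    rcases mem_DD_seq.1 h with ⟨_, h, -⟩ | ⟨_, h, -⟩
    exacts [.inl (ihq h), .inr (ihr h)]
  | star q ih =>
    obtain ⟨_, _, h, -⟩ := mem_DD_star.1 h
    exact ih h
  | dup l' =>
    simp only [DD, Finset.mem_singleton, Prod.mk.injEq] at h
    simp [labelList, h.2.1]

lemma exists_mem_DD_of_mem_labelList {p : LPol F L} {l : L} (hl : l ∈ labelList p) :
    ∃ d k, (d, l, k) ∈ DD p := by
  induction p with
  | filter | mod => simp [labelList] at hl
  | union q r ihq ihr =>
    simp only [labelList, List.mem_append] at hl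
    simp only [DD, Finset.mem_union]
    rcases hl with hl | hl
    · obtain ⟨d, k, h⟩ := ihq hl
      exact ⟨d, k, .inl h⟩
    · obtain ⟨d, k, h⟩ := ihr hl
      exact ⟨d, k, .inr h⟩
  | seq q r ihq ihr =>
    simp only [labelList, List.mem_append] at hl
    rcases hl with hl | hl
    · obtain ⟨d, k, h⟩ := ihq hl
      exact ⟨d, .seq k r, mem_DD_seq.2 (.inl ⟨k, h, rfl⟩)⟩
    · obtain ⟨d, k, h⟩ := ihr hl
      exact ⟨.seq (EE q) d, k, mem_DD_seq.2 (.inr ⟨d, h, rfl⟩)⟩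
  | star q ih =>
    obtain ⟨d, k, h⟩ := ih hl
    exact ⟨_, _, mem_DD_star.2 ⟨d, k, h, rfl, rfl⟩⟩
  | dup l' =>
    simp only [labelList, List.mem_singleton] at hl
    exact ⟨.filter .id, .filter .id, by simp [DD, hl]⟩

lemma eq_of_mem_DD_of_nodup {p d k d' k' : LPol F L} {l : L} (hnd : (labelList p).Nodup)
    (h : (d, l, k) ∈ DD p) (h' : (d', l, k') ∈ DD p) : d = d' ∧ k = k' := by
  induction p generalizing d k d' k' with
  | filter | mod => simp [DD] at h
  | union q r ihq ihr =>
    simp only [labelList, List.nodup_append'] at hnd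
    simp only [DD, Finset.mem_union] at h h'
    rcases h with h | h <;> rcases h' with h' | h'
    · exact ihq hnd.1 h h'
    · exact (hnd.2.2 (mem_labelList_of_mem_DD h) (mem_labelList_of_mem_DD h')).elim
    · exact (hnd.2.2 (mem_labelList_of_mem_DD h') (mem_labelList_of_mem_DD h)).elim
    · exact ihr hnd.2.1 h h'
  | seq q r ihq ihr =>
    simp only [labelList, List.nodup_append'] at hnd
    rcases mem_DD_seq.1 h with ⟨_, hq, rfl⟩ | ⟨_, hr, rfl⟩ <;>
      rcases mem_DD_seq.1 h' with ⟨_, hq', rfl⟩ | ⟨_, hr', rfl⟩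
    · obtain ⟨rfl, rfl⟩ := ihq hnd.1 hq hq'
      simp
    · exact (hnd.2.2 (mem_labelList_of_mem_DD hq) (mem_labelList_of_mem_DD hr')).elim
    · exact (hnd.2.2 (mem_labelList_of_mem_DD hq') (mem_labelList_of_mem_DD hr)).elim
    · obtain ⟨rfl, rfl⟩ := ihr hnd.2.1 hr hr'
      simp
  | star q ih =>
    obtain ⟨_, _, hq, rfl, rfl⟩ := mem_DD_star.1 h
    obtain ⟨_, _, hq', rfl, rfl⟩ := mem_DD_star.1 h'
    obtain ⟨rfl, rfl⟩ := ih hnd hq hq'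
    simp
  | dup =>
    simp only [DD, Finset.mem_singleton, Prod.mk.injEq] at h h'
    exact ⟨h.1.trans h'.1.symm, h.2.2.trans h'.2.2.symm⟩

theorem e_d_characterization_d_general (p : LPol F L)
    (hnd : (labelList p).Nodup) :
    ∀ l ∈ labelList p,
      ∃! dk : LPol F L × LPol F L, (dk.1, l, dk.2) ∈ DD p := by
  intro l hl
  obtain ⟨d, k, hmem⟩ := exists_mem_DD_of_mem_labelList hl
  refine ⟨(d, k), hmem, fun dk hdk => ?_⟩
  obtain ⟨hd, hk⟩ := eq_of_mem_DD_of_nodup hnd hdk hmem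
  exact Prod.ext hd hk

/-- **Characterization of E and D, part (d).** If the dup labels of `p` are pairwise
distinct, then for every label `ℓ` occurring in `p` there exist unique programs `d`
and `k` with `(d, ℓ, k) ∈ D⟦p⟧`. -/
theorem e_d_characterization_d [Fintype F] (p : LPol F L)
    (hnd : (labelList p).Nodup) :
    ∀ l ∈ labelList p,
      ∃! dk : LPol F L × LPol F L, (dk.1, l, dk.2) ∈ DD p :=
  e_d_characterization_d_general p hnd

end NetKAT
end

section
/- Program Automaton Soundness: for every NetKAT program p whose dup labels are pairwise distinct, all packets pk_in, pk₁, …, pk_n (n ≥ 0), and pk_out, the history pk_out :: pk_n :: ⋯ :: pk₁ :: [] (that is, pk_out followed by pk_n down to pk₁; just [pk_out] when n = 0) belongs to ⟦p⟧ [pk_in] if and only if accept 0 (pk_in, [pk₁, …, pk_n], pk_out) holds in the automaton A(p). -/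
/-!
Every program `k` satisfies the fundamental decomposition
`⟦k⟧ = ⟦E⟦k⟧⟧ ∪ ⋃_{(d, ℓ, k') ∈ D⟦k⟧} ⟦d · dup · k'⟧`.
Since `E⟦k⟧` and every `d` are dup-free, they leave the tail of a history alone, while the `dup`
records exactly one packet; and no program ever inspects the tail. Hence a history that records
no packet comes from `E⟦k⟧` alone, and one that records `pk₁` first comes from a single step
`[pk₁] ∈ ⟦d⟧ [pk_in]` followed by a run of `k'` from `[pk₁]`. The continuations `k'` met along
the way stay inside `D⟦p⟧`, where pairwise distinct labels make `k'` the continuation `k_ℓ` of its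
label, so the automaton's state `ℓ` knows exactly which program remains to be run; induction on
the number of recorded packets concludes.
-/

namespace NetKAT

open Relation

theorem injOn_union_of_forall_ne {α β : Type*} {f : α → β} {s t : Set α} (hs : s.InjOn f)
    (ht : t.InjOn f) (hst : ∀ x ∈ s, ∀ y ∈ t, f x ≠ f y) : (s ∪ t).InjOn f :=
  (Set.injOn_union (Set.disjoint_left.2 fun x hs ht => hst x hs x ht rfl)).2 ⟨hs, ht, hst⟩

section Semantics

variable {F L : Type}

def predHolds : Pred F → Packet F → Prop
  | .id, _ => True
  | .drop, _ => False
  | .test f n, pk => pk f = n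
  | .or a b, pk => predHolds a pk ∨ predHolds b pk
  | .and a b, pk => predHolds a pk ∧ predHolds b pk
  | .not a, pk => ¬ predHolds a pk

theorem mem_predSem {a : Pred F} {h h' : Hist F} :
    h' ∈ predSem a h ↔ h' = h ∧ predHolds a h.1 := by
  induction a generalizing h h' with
  | test f n => by_cases hf : h.1 f = n <;> simp [predSem, predHolds, hf]
  | and a b iha ihb =>
    simp only [predSem, predHolds, Set.mem_iUnion, iha, ihb, exists_prop]
    constructor
    · rintro ⟨_, ⟨rfl, ha⟩, rfl, hb⟩
      exact ⟨rfl, ha, hb⟩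
    · rintro ⟨rfl, ha, hb⟩
      exact ⟨h', ⟨rfl, ha⟩, rfl, hb⟩
  | or a b iha ihb => simp only [predSem, predHolds, Set.mem_union, iha, ihb, and_or_left]
  | not a iha =>
    simp only [predSem, predHolds, Set.mem_sdiff, Set.mem_singleton_iff, iha]
    tauto
  | _ => simp [predSem, predHolds]

theorem exists_mem_iterRel_iff {f : Hist F → Set (Hist F)} {h h' : Hist F} :
    (∃ i, h' ∈ iterRel f i h) ↔ ReflTransGen (fun x y => y ∈ f x) h h' := by
  constructor
  · rintro ⟨i, hi⟩
    induction i generalizing h with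
    | zero => rw [iterRel, Set.mem_singleton_iff] at hi; exact hi ▸ .refl
    | succ i ih =>
      simp only [iterRel, Set.mem_iUnion, exists_prop] at hi
      obtain ⟨h₁, hh₁, hi⟩ := hi
      exact .head hh₁ (ih hi)
  · intro hr
    induction hr using ReflTransGen.head_induction_on with
    | refl => exact ⟨0, rfl⟩
    | head hstep _ ih =>
      obtain ⟨i, hi⟩ := ih
      exact ⟨i + 1, Set.mem_biUnion hstep hi⟩

theorem iterRel_map {f : Hist F → Set (Hist F)} {φ : Hist F → Hist F}
    (hf : ∀ h, f (φ h) = φ '' f h) (i : ℕ) (h : Hist F) :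
    iterRel f i (φ h) = φ '' iterRel f i h := by
  induction i generalizing h with
  | zero => simp [iterRel]
  | succ i ih => simp only [iterRel, hf, Set.biUnion_image, ih, Set.image_iUnion₂]

theorem dupFree_EE (p : LPol F L) : (EE p).dupFree := by
  induction p <;> simp_all [EE, LPol.dupFree]

def appendTail (t : List (Packet F)) (h : Hist F) : Hist F := (h.1, h.2 ++ t)

variable [DecidableEq F]

theorem mem_polSem_star {p : LPol F L} {h h' : Hist F} :
    h' ∈ polSem (.star p) h ↔ ReflTransGen (fun x y => y ∈ polSem p x) h h' := by
  rw [polSem, Set.mem_iUnion, exists_mem_iterRel_iff]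

theorem mem_polSem_seq {p q : LPol F L} {h h' : Hist F} :
    h' ∈ polSem (.seq p q) h ↔ ∃ h₁ ∈ polSem p h, h' ∈ polSem q h₁ := by
  rw [polSem, Set.mem_iUnion₂]
  simp only [exists_prop]

theorem polSem_EE_subset (p : LPol F L) (h : Hist F) : polSem (EE p) h ⊆ polSem p h := by
  induction p generalizing h with
  | union p q ihp ihq => exact Set.union_subset_union (ihp h) (ihq h)
  | seq p q ihp ihq => exact Set.biUnion_mono (ihp h) fun h' _ => ihq h'
  | star p ihp =>
    intro h' hh'
    rw [EE, mem_polSem_star] at hh'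
    exact mem_polSem_star.2 (ReflTransGen.mono (fun x y hxy => ihp x hxy) _ _ hh')
  | dup l => simp [EE, polSem, predSem]
  | _ => rfl

theorem tail_eq_of_mem_polSem {p : LPol F L} (hp : p.dupFree) {h h' : Hist F}
    (hh' : h' ∈ polSem p h) : h'.2 = h.2 := by
  induction p generalizing h h' with
  | filter a => rw [polSem, mem_predSem] at hh'; rw [hh'.1]
  | mod f n => rw [polSem, Set.mem_singleton_iff] at hh'; rw [hh']
  | union p q ihp ihq => exact hh'.elim (ihp hp.1) (ihq hp.2)
  | seq p q ihp ihq =>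
    obtain ⟨h₁, hh₁, hh'⟩ := mem_polSem_seq.1 hh'
    rw [ihq hp.2 hh', ihp hp.1 hh₁]
  | star p ihp =>
    have hr := mem_polSem_star.1 hh'
    clear hh'
    induction hr with
    | refl => rfl
    | tail _ hstep ih => rw [ihp hp hstep, ih]
  | dup l => exact absurd hp id

theorem polSem_appendTail (p : LPol F L) (t : List (Packet F)) (h : Hist F) :
    polSem p (appendTail t h) = appendTail t '' polSem p h := by
  induction p generalizing h with
  | filter a =>
    ext h'
    obtain ⟨pk, s⟩ := h
    simp [polSem, mem_predSem, appendTail, and_comm, eq_comm]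
  | mod f n => simp [polSem, appendTail]
  | union p q ihp ihq => simp only [polSem, ihp, ihq, Set.image_union]
  | seq p q ihp ihq => simp only [polSem, ihp, ihq, Set.biUnion_image, Set.image_iUnion₂]
  | star p ihp => simp only [polSem, iterRel_map ihp, Set.image_iUnion]
  | dup l => simp [polSem, appendTail]

theorem mem_polSem_iff_exists_append {p : LPol F L} {pk pk' : Packet F}
    {s t : List (Packet F)} :
    ((pk', s) : Hist F) ∈ polSem p (pk, t) ↔
      ∃ s', s = s' ++ t ∧ ((pk', s') : Hist F) ∈ polSem p (pk, []) := by
  have h := polSem_appendTail p t (pk, [])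
  rw [appendTail, List.nil_append] at h
  rw [h]
  simp [appendTail, and_comm, eq_comm]

end Semantics

section Derivatives

variable {F L : Type} [DecidableEq F] [DecidableEq L]

def conts (p : LPol F L) : Finset (L × LPol F L) := (DD p).image Prod.snd

@[simp] theorem conts_filter (a : Pred F) : conts (.filter a : LPol F L) = ∅ := rfl

@[simp] theorem conts_mod (f : F) (n : ℕ) : conts (.mod f n : LPol F L) = ∅ := rfl

@[simp] theorem conts_union (q r : LPol F L) : conts (.union q r) = conts q ∪ conts r := by
  simp [conts, DD, Finset.image_union]

@[simp] theorem conts_seq (q r : LPol F L) :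
    conts (.seq q r) = (conts q).image (fun x => (x.1, .seq x.2 r)) ∪ conts r := by
  simp only [conts, DD, Finset.image_union, Finset.image_image]
  rfl

@[simp] theorem conts_star (q : LPol F L) :
    conts (.star q) = (conts q).image (fun x => (x.1, .seq x.2 (.star q))) := by
  simp only [conts, DD, Finset.image_image]
  rfl

@[simp] theorem conts_dup (l : L) : conts (.dup l : LPol F L) = {(l, .filter .id)} := rfl

theorem fst_mem_labelList_of_mem_conts {p : LPol F L} {x : L × LPol F L} (hx : x ∈ conts p) :
    x.1 ∈ labelList p := by
  induction p generalizing x with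
  | union q r ihq ihr =>
    simp only [conts_union, Finset.mem_union] at hx
    simp [labelList, hx.imp ihq ihr]
  | seq q r ihq ihr =>
    simp only [conts_seq, Finset.mem_union, Finset.mem_image] at hx
    rcases hx with ⟨y, hy, rfl⟩ | hx
    · simp [labelList, ihq hy]
    · simp [labelList, ihr hx]
  | star q ihq =>
    simp only [conts_star, Finset.mem_image] at hx
    obtain ⟨y, hy, rfl⟩ := hx
    simpa [labelList] using ihq hy
  | dup l => simp_all [labelList]
  | _ => simp_all

theorem conts_subset_of_mem_conts {p : LPol F L} {x : L × LPol F L} (hx : x ∈ conts p) :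
    conts x.2 ⊆ conts p := by
  induction p generalizing x with
  | union q r ihq ihr =>
    rw [conts_union] at hx ⊢
    rcases Finset.mem_union.1 hx with hx | hx
    · exact (ihq hx).trans Finset.subset_union_left
    · exact (ihr hx).trans Finset.subset_union_right
  | seq q r ihq ihr =>
    simp only [conts_seq, Finset.mem_union, Finset.mem_image] at hx
    rcases hx with ⟨y, hy, rfl⟩ | hx
    · rw [conts_seq, conts_seq]
      exact Finset.union_subset_union (Finset.image_subset_image (ihq hy)) subset_rfl
    · exact (ihr hx).trans (by simp)
  | star q ihq =>
    simp only [conts_star, Finset.mem_image] at hx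
    obtain ⟨y, hy, rfl⟩ := hx
    rw [conts_seq, conts_star]
    exact Finset.union_subset (Finset.image_subset_image (ihq hy)) subset_rfl
  | dup l => simp_all
  | _ => simp_all

theorem injOn_fst_conts {p : LPol F L} (hp : (labelList p).Nodup) :
    Set.InjOn Prod.fst (conts p : Set (L × LPol F L)) := by
  induction p with
  | union q r ihq ihr =>
    rw [labelList, List.nodup_append] at hp
    obtain ⟨hq, hr, hqr⟩ := hp
    rw [conts_union, Finset.coe_union]
    refine injOn_union_of_forall_ne (ihq hq) (ihr hr) fun x hx y hy => ?_
    exact hqr _ (fst_mem_labelList_of_mem_conts hx) _ (fst_mem_labelList_of_mem_conts hy)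
  | seq q r ihq ihr =>
    rw [labelList, List.nodup_append] at hp
    obtain ⟨hq, hr, hqr⟩ := hp
    rw [conts_seq, Finset.coe_union, Finset.coe_image]
    refine injOn_union_of_forall_ne (Set.InjOn.image_of_comp (ihq hq)) (ihr hr) ?_
    rintro _ ⟨x, hx, rfl⟩ y hy
    exact hqr _ (fst_mem_labelList_of_mem_conts hx) _ (fst_mem_labelList_of_mem_conts hy)
  | star q ihq =>
    rw [conts_star, Finset.coe_image]
    exact Set.InjOn.image_of_comp (ihq hp)
  | _ => simp

def Decomposes (k : LPol F L) : Prop :=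
  ∀ h h' : Hist F, h' ∈ polSem k h ↔ h' ∈ polSem (EE k) h ∨
    ∃ x ∈ DD k, ∃ pk, (pk, h.2) ∈ polSem x.1 h ∧ h' ∈ polSem x.2.2 (pk, pk :: h.2)

theorem Decomposes.union {q r : LPol F L} (hq : Decomposes q) (hr : Decomposes r) :
    Decomposes (.union q r) := by
  intro h h'
  simp only [polSem, EE, DD, Set.mem_union, Finset.mem_union, hq h h', hr h h', or_and_right,
    exists_or]
  exact or_or_or_comm

theorem Decomposes.seq {q r : LPol F L} (hq : Decomposes q) (hr : Decomposes r) :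
    Decomposes (.seq q r) := by
  intro h h'
  simp only [EE, DD, mem_polSem_seq, Finset.mem_union, Finset.mem_image]
  constructor
  · rintro ⟨h₁, hh₁, hh'⟩
    rcases (hq h h₁).1 hh₁ with hE | ⟨x, hx, pk, hpk, hh₁⟩
    · have ht : h₁.2 = h.2 := tail_eq_of_mem_polSem (dupFree_EE q) hE
      rcases (hr h₁ h').1 hh' with hE' | ⟨x, hx, pk, hpk, hh'⟩
      · exact Or.inl ⟨h₁, hE, hE'⟩
      · exact Or.inr ⟨_, Or.inr ⟨x, hx, rfl⟩, pk,
          mem_polSem_seq.2 ⟨h₁, hE, ht ▸ hpk⟩, ht ▸ hh'⟩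
    · exact Or.inr ⟨_, Or.inl ⟨x, hx, rfl⟩, pk, hpk,
        mem_polSem_seq.2 ⟨h₁, hh₁, hh'⟩⟩
  · rintro (⟨h₁, hE, hE'⟩ | ⟨_, ⟨x, hx, rfl⟩ | ⟨x, hx, rfl⟩, pk, hpk, hh'⟩)
    · exact ⟨h₁, polSem_EE_subset q h hE, polSem_EE_subset r h₁ hE'⟩
    · obtain ⟨h₁, hh₁, hh'⟩ := mem_polSem_seq.1 hh'
      exact ⟨h₁, (hq h h₁).2 (Or.inr ⟨x, hx, pk, hpk, hh₁⟩), hh'⟩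
    · obtain ⟨h₁, hE, hpk⟩ := mem_polSem_seq.1 hpk
      have ht : h₁.2 = h.2 := tail_eq_of_mem_polSem (dupFree_EE q) hE
      refine ⟨h₁, polSem_EE_subset q h hE, (hr h₁ h').2 (Or.inr ⟨x, hx, pk, ?_⟩)⟩
      exact ht ▸ ⟨hpk, hh'⟩

theorem Decomposes.star {q : LPol F L} (hq : Decomposes q) : Decomposes (.star q) := by
  intro h h'
  simp only [DD, Finset.mem_image]
  constructor
  · intro hh'
    induction mem_polSem_star.1 hh' using ReflTransGen.head_induction_on with
    | refl => exact Or.inl (mem_polSem_star.2 .refl)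
    | head hstep hrest ih =>
      rcases (hq _ _).1 hstep with hE | ⟨x, hx, pk, hpk, hh₁⟩
      · have ht := tail_eq_of_mem_polSem (dupFree_EE q) hE
        rcases ih (mem_polSem_star.2 hrest) with hE' | ⟨_, ⟨x, hx, rfl⟩, pk, hpk, hh'⟩
        · exact Or.inl (mem_polSem_star.2 (.head hE (mem_polSem_star.1 hE')))
        · obtain ⟨h₂, hh₂, hpk⟩ := mem_polSem_seq.1 hpk
          refine Or.inr ⟨_, ⟨x, hx, rfl⟩, pk, mem_polSem_seq.2 ⟨h₂, ?_, ht ▸ hpk⟩, ht ▸ hh'⟩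
          exact mem_polSem_star.2 (.head hE (mem_polSem_star.1 hh₂))
      · exact Or.inr ⟨_, ⟨x, hx, rfl⟩, pk,
          mem_polSem_seq.2 ⟨_, mem_polSem_star.2 .refl, hpk⟩,
          mem_polSem_seq.2 ⟨_, hh₁, mem_polSem_star.2 hrest⟩⟩
  · rintro (hE | ⟨_, ⟨x, hx, rfl⟩, pk, hpk, hh'⟩)
    · exact polSem_EE_subset _ h hE
    obtain ⟨h₁, hE, hpk⟩ := mem_polSem_seq.1 hpk
    obtain ⟨h₂, hh₂, hh'⟩ := mem_polSem_seq.1 hh'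
    have ht := tail_eq_of_mem_polSem (dupFree_EE (.star q)) hE
    have hstep : h₂ ∈ polSem q h₁ := (hq h₁ h₂).2 (Or.inr ⟨x, hx, pk, ht ▸ hpk, ht ▸ hh₂⟩)
    exact mem_polSem_star.2 <| (mem_polSem_star.1 (polSem_EE_subset _ h hE)).trans
      (.head hstep (mem_polSem_star.1 hh'))

theorem decomposes (k : LPol F L) : Decomposes k := by
  induction k with
  | union q r ihq ihr => exact ihq.union ihr
  | seq q r ihq ihr => exact ihq.seq ihr
  | star q ihq => exact ihq.star
  | dup l => rintro ⟨pk, t⟩ h'; simp [polSem, predSem, EE, DD]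
  | _ => intro h h'; simp [EE, DD]

theorem mem_polSem_nil_iff (k : LPol F L) (pk pk' : Packet F) :
    ((pk', []) : Hist F) ∈ polSem k (pk, []) ↔
      ((pk', []) : Hist F) ∈ polSem (EE k) (pk, []) := by
  rw [decomposes k, or_iff_left]
  rintro ⟨x, -, pk₁, -, hx⟩
  obtain ⟨s, hs, -⟩ := mem_polSem_iff_exists_append.1 hx
  simp at hs

theorem mem_polSem_snoc_iff (k : LPol F L) (pk pk' pk₁ : Packet F) (s : List (Packet F)) :
    ((pk', s ++ [pk₁]) : Hist F) ∈ polSem k (pk, []) ↔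
      ∃ x ∈ DD k, ((pk₁, []) : Hist F) ∈ polSem x.1 (pk, []) ∧
        ((pk', s) : Hist F) ∈ polSem x.2.2 (pk₁, []) := by
  rw [decomposes k, or_iff_right]
  · simp only [mem_polSem_iff_exists_append (t := [_]), List.append_singleton_inj]
    constructor
    · rintro ⟨x, hx, pk₂, hpk, s', ⟨rfl, rfl⟩, hs⟩
      exact ⟨x, hx, hpk, hs⟩
    · rintro ⟨x, hx, hpk, hs⟩
      exact ⟨x, hx, pk₁, hpk, s, ⟨rfl, rfl⟩, hs⟩
  · intro hE
    simpa using tail_eq_of_mem_polSem (dupFree_EE k) hE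

theorem mem_polSem_iff_accept {p : LPol F L} {κ : Option L → LPol F L}
    (hκ : ∀ x ∈ conts p, κ (some x.1) = x.2) {s : Option L} (hs : conts (κ s) ⊆ conts p)
    (pk pk' : Packet F) (w : List (Packet F)) :
    ((pk', w.reverse) : Hist F) ∈ polSem (κ s) (pk, []) ↔ accept κ s pk w pk' := by
  induction w generalizing s pk with
  | nil => rw [List.reverse_nil, mem_polSem_nil_iff]; rfl
  | cons pk₁ w ih =>
    have hnext : ∀ x ∈ DD (κ s),
        κ (some x.2.1) = x.2.2 ∧ conts (κ (some x.2.1)) ⊆ conts p := by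
      intro x hx
      have hx' := hs (Finset.mem_image_of_mem Prod.snd hx)
      exact ⟨hκ _ hx', hκ _ hx' ▸ conts_subset_of_mem_conts hx'⟩
    rw [List.reverse_cons, mem_polSem_snoc_iff, accept]
    simp only [trans, Set.mem_ofPred_eq]
    constructor
    · rintro ⟨x, hx, hpk, hw⟩
      refine ⟨some x.2.1, ⟨x.2.1, x.1, x.2.2, rfl, hx, hpk⟩, (ih (hnext x hx).2 pk₁).1 ?_⟩
      rwa [(hnext x hx).1]
    · rintro ⟨_, ⟨l, d, k, rfl, hx, hpk⟩, hw⟩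
      obtain ⟨hκl, hsub⟩ := hnext _ hx
      refine ⟨(d, l, k), hx, hpk, ?_⟩
      rw [← hκl]
      exact (ih hsub pk₁).2 hw

theorem automaton_soundness_general (p : LPol F L)
    (hnd : (labelList p).Nodup)
    (κ : Option L → LPol F L) (hκ0 : κ none = p)
    (hκ : ∀ l ∈ labelList p, ∃ d, (d, l, κ (some l)) ∈ DD p)
    (pkin pkout : Packet F) (w : List (Packet F)) :
    ((pkout, w.reverse) : Hist F) ∈
        polSem p ((pkin, ([] : List (Packet F))) : Hist F)
      ↔ accept κ none pkin w pkout := by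
  have hκp : ∀ x ∈ conts p, κ (some x.1) = x.2 := by
    intro x hx
    obtain ⟨d, hd⟩ := hκ x.1 (fst_mem_labelList_of_mem_conts hx)
    exact congrArg Prod.snd
      (injOn_fst_conts hnd (Finset.mem_image_of_mem Prod.snd hd) hx rfl)
  have h := mem_polSem_iff_accept hκp (s := none) (hκ0 ▸ subset_rfl) pkin pkout w
  rwa [hκ0] at h

/-- **Program Automaton Soundness.** For a program `p` with pairwise-distinct dup
labels, a history `pk_out :: pk_n :: ⋯ :: pk₁ :: []` belongs to `⟦p⟧ [pk_in]` iff the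
automaton `A(p)` accepts the guarded string `(pk_in, [pk₁, …, pk_n], pk_out)` from the
start state `0` (represented by `none`; `κ` assigns to each state its continuation:
`κ none = p`, and `κ (some ℓ)` is the unique continuation `k_ℓ` of `ℓ` in `D⟦p⟧`). -/
theorem automaton_soundness [Fintype F] (p : LPol F L)
    (hnd : (labelList p).Nodup)
    (κ : Option L → LPol F L) (hκ0 : κ none = p)
    (hκ : ∀ l ∈ labelList p, ∃ d, (d, l, κ (some l)) ∈ DD p)
    (pkin pkout : Packet F) (w : List (Packet F)) :
    ((pkout, w.reverse) : Hist F) ∈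
        polSem p ((pkin, ([] : List (Packet F))) : Hist F)
      ↔ accept κ none pkin w pkout :=
  automaton_soundness_general p hnd κ hκ0 hκ pkin pkout w

end Derivatives

end NetKAT
end
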